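/- Let C be a conjugation on H and let p ∈ [1, ∞). For every T ∈ S_C belonging to the Schatten p-class B_p(H) and every ε > 0, there exists a finite-rank operator F ∈ S_C with ‖T − F‖_p < ε, where ‖·‖_p is the Schatten p-norm. Likewise, for every compact T ∈ S_C and every ε > 0 there exists a finite-rank operator F ∈ S_C with ‖T − F‖ < ε in the operator norm. -/

import Mathlib

def IsConjugation {H : Type*} [NormedAddCommGroup H] [InnerProductSpace ℂ H]
    (C : H → H) : Prop :=
  (∀ x y, C (x + y) = C x + C y) ∧
  (∀ (a : ℂ) (x : H), C (a • x) = (starRingEnd ℂ a) • C x) ∧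
  (∀ x, C (C x) = x) ∧
  (∀ x y : H, (inner ℂ (C x) (C y) : ℂ) = inner ℂ y x)

/-- The set `S_C` of `C`-symmetric bounded operators: `C T C = T*`. -/
def SC {H : Type*} [NormedAddCommGroup H] [InnerProductSpace ℂ H] [CompleteSpace H]
    (C : H → H) : Set (H →L[ℂ] H) :=
  {T | ∀ x : H, C (T (C x)) = ContinuousLinearMap.adjoint T x}

/-- The Jordan product `A ∘ B = (AB + BA)/2`. -/
noncomputable def jmul {H : Type*} [NormedAddCommGroup H] [InnerProductSpace ℂ H]
    [CompleteSpace H] (A B : H →L[ℂ] H) : H →L[ℂ] H :=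
  (2 : ℂ)⁻¹ • (A * B + B * A)

/-- A finite-rank bounded operator. -/
def IsFiniteRank {H : Type*} [NormedAddCommGroup H] [InnerProductSpace ℂ H]
    (F : H →L[ℂ] H) : Prop :=
  FiniteDimensional ℂ (LinearMap.range (F : H →ₗ[ℂ] H))

/-- The `n`-th approximation number (= singular value) of `T`:
the distance from `T` to the operators of rank at most `n`. -/
noncomputable def approxNum {H : Type*} [NormedAddCommGroup H] [InnerProductSpace ℂ H]
    (T : H →L[ℂ] H) (n : ℕ) : ℝ :=
  sInf {r : ℝ | ∃ F : H →L[ℂ] H, IsFiniteRank F ∧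
    Module.finrank ℂ (LinearMap.range (F : H →ₗ[ℂ] H)) ≤ n ∧ r = ‖T - F‖}

/-- Membership in the Schatten `p`-class, via summability of the `p`-th powers of the
singular values. -/
def MemSchatten {H : Type*} [NormedAddCommGroup H] [InnerProductSpace ℂ H]
    (p : ℝ) (T : H →L[ℂ] H) : Prop :=
  Summable (fun n : ℕ => approxNum T n ^ p)

/-- The Schatten `p`-norm `‖T‖_p = (∑ sₙ(T)^p)^{1/p}`. -/
noncomputable def schattenNorm {H : Type*} [NormedAddCommGroup H] [InnerProductSpace ℂ H]
    (p : ℝ) (T : H →L[ℂ] H) : ℝ :=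
  (∑' n : ℕ, approxNum T n ^ p) ^ (1 / p)


/-!
The map `G ↦ (G + C G* C) / 2` sends every operator into `S_C`, at most doubles its rank, and does
not increase its operator-norm distance to any `T ∈ S_C`: since `T = C T* C`, the difference
`T - (G + C G* C) / 2` is the average of `T - G` and `C (T - G)* C`, and `A ↦ C A* C` is isometric.
So it suffices to approximate `T` by finite-rank operators `G` without any symmetry.

For compact `T`, project `T` onto the span of a finite `ε`-net of the image of the unit ball.
For `T` in the Schatten class, with approximation numbers `sₙ`, pick `G` of rank `≤ 2k` with
`‖T - G‖ ≈ s_{2k}(T)`, and let `F` be its symmetrization, of rank `≤ 4k`. Then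
`s_{n+5k}(T - F) ≤ s_{n+k}(T)` and `sₙ(T - F) ≤ ‖T - G‖`, so
`‖T - F‖ₚᵖ ≤ 5k s_{2k}(T)ᵖ + ∑_{n ≥ k} sₙ(T)ᵖ ≤ 6 ∑_{n ≥ k} sₙ(T)ᵖ`, because by monotonicity
`k s_{2k}(T)ᵖ ≤ ∑_{k ≤ n < 2k} sₙ(T)ᵖ`. This tail is small for large `k`.
-/

universe u

open ContinuousLinearMap Topology

theorem LinearEquiv.rank_map_eq_of_semilinear {R M : Type*} [Ring R] [AddCommGroup M]
    [Module R M] {σ σ' : R →+* R} [RingHomInvPair σ σ'] [RingHomInvPair σ' σ]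
    (e : M ≃ₛₗ[σ] M) (p : Submodule R M) :
    Module.rank R (p.map (e : M →ₛₗ[σ] M)) = Module.rank R p :=
  (rank_eq_of_equiv_equiv σ (e.submoduleMap p).toAddEquiv
    (Function.bijective_iff_has_inverse.2
      ⟨σ', fun _ => RingHomInvPair.comp_apply_eq, fun _ => RingHomInvPair.comp_apply_eq₂⟩)
    fun r m => (e.submoduleMap p).map_smulₛₗ r m).symm

theorem LinearMap.rank_sub_le {K V V' : Type*} [DivisionRing K] [AddCommGroup V] [Module K V]
    [AddCommGroup V'] [Module K V'] (f g : V →ₗ[K] V') : rank (f - g) ≤ rank f + rank g := by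
  rw [sub_eq_add_neg]
  exact (rank_add_le f (-g)).trans_eq (by rw [rank, rank, range_neg])

theorem ContinuousLinearMap.rank_adjoint_le {𝕜 : Type*} {E F : Type u} [RCLike 𝕜]
    [NormedAddCommGroup E] [InnerProductSpace 𝕜 E] [CompleteSpace E] [NormedAddCommGroup F]
    [InnerProductSpace 𝕜 F] [CompleteSpace F] (A : E →L[𝕜] F)
    [FiniteDimensional 𝕜 (LinearMap.range (A : E →ₗ[𝕜] F))] :
    LinearMap.rank (adjoint A : F →ₗ[𝕜] E) ≤ LinearMap.rank (A : E →ₗ[𝕜] F) := by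
  refine (Submodule.rank_mono ?_).trans (rank_map_le (adjoint A : F →ₗ[𝕜] E) _)
  rintro _ ⟨y, rfl⟩
  obtain ⟨v, hv, w, hw, rfl⟩ := (LinearMap.range (A : E →ₗ[𝕜] F)).exists_add_mem_mem_orthogonal y
  have hw0 : adjoint A w = 0 := LinearMap.mem_ker.1 (orthogonal_range A ▸ hw)
  exact ⟨v, hv, by simp [hw0]⟩

theorem IsCompactOperator.exists_finiteDimensional_range_norm_sub_lt {𝕜 E F : Type*} [RCLike 𝕜]
    [NormedAddCommGroup E] [NormedSpace 𝕜 E] [NormedAddCommGroup F] [InnerProductSpace 𝕜 F]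
    {T : E →L[𝕜] F} (hT : IsCompactOperator T) {ε : ℝ} (hε : 0 < ε) :
    ∃ G : E →L[𝕜] F, FiniteDimensional 𝕜 (LinearMap.range (G : E →ₗ[𝕜] F)) ∧ ‖T - G‖ < ε := by
  obtain ⟨t, ht, hnet⟩ := Metric.totallyBounded_iff.1
    (hT.isCompact_closure_image_closedBall 1).totallyBounded (ε / 2) (half_pos hε)
  set V := Submodule.span 𝕜 t
  have : FiniteDimensional 𝕜 V := FiniteDimensional.span_of_finite 𝕜 ht
  refine ⟨V.starProjection ∘L T, Submodule.finiteDimensional_of_le (S₂ := V) ?_, ?_⟩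
  · rintro _ ⟨x, rfl⟩
    exact V.starProjection_apply_mem (T x)
  refine (opNorm_le_of_unit_norm (half_pos hε).le fun x hx => ?_).trans_lt (half_lt_self hε)
  obtain ⟨y, hy, hxy⟩ := Set.mem_iUnion₂.1 (hnet (subset_closure ⟨x, by simp [hx], rfl⟩))
  calc ‖(T - V.starProjection ∘L T) x‖ = ‖T x - V.starProjection (T x)‖ := rfl
    _ ≤ ‖T x - y‖ := by
        rw [Submodule.starProjection_minimal]
        exact ciInf_le ⟨0, by rintro _ ⟨_, rfl⟩; exact norm_nonneg _⟩
          (⟨y, Submodule.subset_span hy⟩ : V)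
    _ ≤ ε / 2 := (mem_ball_iff_norm.1 hxy).le

theorem summable_and_tsum_le_of_shift {b g : ℕ → ℝ} (hb : 0 ≤ b) (hg : Summable g) {m : ℕ}
    {c : ℝ} (hc : ∀ n, b n ≤ c) (hshift : ∀ n, b (n + m) ≤ g n) :
    Summable b ∧ ∑' n, b n ≤ m * c + ∑' n, g n := by
  have htail : Summable fun n => b (n + m) := hg.of_nonneg_of_le (fun n => hb _) hshift
  have hsum : Summable b := (summable_nat_add_iff m).1 htail
  refine ⟨hsum, ?_⟩
  rw [← hsum.sum_add_tsum_nat_add m]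
  gcongr
  · simpa using Finset.sum_le_card_nsmul (Finset.range m) b c fun n _ => hc n
  · exact hshift _

theorem Antitone.nat_mul_le_tsum_nat_add {f : ℕ → ℝ} (hf : Antitone f) (hs : Summable f)
    (h0 : 0 ≤ f) (j k : ℕ) : k * f (j + k) ≤ ∑' n, f (n + j) := by
  calc k * f (j + k) ≤ ∑ n ∈ Finset.range k, f (n + j) := by
        simpa using Finset.card_nsmul_le_sum (Finset.range k) (fun n => f (n + j)) (f (j + k))
          fun n hn => hf (by rw [Finset.mem_range] at hn; omega)
    _ ≤ ∑' n, f (n + j) :=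
        ((summable_nat_add_iff j).2 hs).sum_le_tsum _ fun n _ => h0 _

theorem isFiniteRank_iff_rank_lt_aleph0 {H : Type*} [NormedAddCommGroup H]
    [InnerProductSpace ℂ H] {F : H →L[ℂ] H} :
    IsFiniteRank F ↔ LinearMap.rank (F : H →ₗ[ℂ] H) < Cardinal.aleph0 :=
  Module.rank_lt_aleph0_iff.symm

namespace IsConjugation

variable {H : Type*} [NormedAddCommGroup H] [InnerProductSpace ℂ H] {C : H → H}

theorem apply_apply (hC : IsConjugation C) (x : H) : C (C x) = x := hC.2.2.1 x

theorem inner_apply_apply (hC : IsConjugation C) (x y : H) :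
    inner ℂ (C x) (C y) = inner ℂ y x :=
  hC.2.2.2 x y

theorem norm_apply (hC : IsConjugation C) (x : H) : ‖C x‖ = ‖x‖ := by
  rw [norm_eq_sqrt_re_inner (𝕜 := ℂ), norm_eq_sqrt_re_inner (𝕜 := ℂ), hC.inner_apply_apply]

def toLinearIsometryEquiv (hC : IsConjugation C) : H ≃ₗᵢ⋆[ℂ] H where
  toFun := C
  invFun := C
  map_add' := hC.1
  map_smul' := hC.2.1
  left_inv := hC.apply_apply
  right_inv := hC.apply_apply
  norm_map' := hC.norm_apply

@[simp]
theorem coe_toLinearIsometryEquiv (hC : IsConjugation C) : ⇑hC.toLinearIsometryEquiv = C := rfl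

def conjOp (hC : IsConjugation C) (A : H →L[ℂ] H) : H →L[ℂ] H :=
  (hC.toLinearIsometryEquiv.toContinuousLinearEquiv : H →SL[starRingEnd ℂ] H).comp
    (A.comp (hC.toLinearIsometryEquiv.toContinuousLinearEquiv : H →SL[starRingEnd ℂ] H))

variable (hC : IsConjugation C)

@[simp]
theorem conjOp_apply (A : H →L[ℂ] H) (x : H) : hC.conjOp A x = C (A (C x)) := rfl

@[simp]
theorem conjOp_conjOp (A : H →L[ℂ] H) : hC.conjOp (hC.conjOp A) = A := by
  ext x
  simp [hC.apply_apply]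

theorem conjOp_add (A B : H →L[ℂ] H) : hC.conjOp (A + B) = hC.conjOp A + hC.conjOp B := by
  ext x
  exact map_add hC.toLinearIsometryEquiv _ _

theorem conjOp_sub (A B : H →L[ℂ] H) : hC.conjOp (A - B) = hC.conjOp A - hC.conjOp B := by
  ext x
  exact map_sub hC.toLinearIsometryEquiv _ _

theorem conjOp_smul (c : ℂ) (A : H →L[ℂ] H) :
    hC.conjOp (c • A) = starRingEnd ℂ c • hC.conjOp A := by
  ext x
  exact map_smulₛₗ hC.toLinearIsometryEquiv _ _

theorem norm_conjOp_le (A : H →L[ℂ] H) : ‖hC.conjOp A‖ ≤ ‖A‖ :=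
  opNorm_le_bound _ (norm_nonneg A) fun x => by
    simpa [hC.norm_apply] using A.le_opNorm (C x)

theorem range_conjOp (A : H →L[ℂ] H) :
    LinearMap.range (hC.conjOp A : H →ₗ[ℂ] H) =
      (LinearMap.range (A : H →ₗ[ℂ] H)).map
        (hC.toLinearIsometryEquiv.toLinearEquiv : H →ₛₗ[starRingEnd ℂ] H) := by
  ext x
  constructor
  · rintro ⟨y, rfl⟩
    exact ⟨A (C y), ⟨C y, rfl⟩, rfl⟩
  · rintro ⟨_, ⟨y, rfl⟩, rfl⟩
    exact ⟨C y, by simp [hC.apply_apply]⟩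

theorem rank_conjOp (A : H →L[ℂ] H) :
    LinearMap.rank (hC.conjOp A : H →ₗ[ℂ] H) = LinearMap.rank (A : H →ₗ[ℂ] H) := by
  rw [LinearMap.rank, hC.range_conjOp, LinearEquiv.rank_map_eq_of_semilinear]

variable [CompleteSpace H]

theorem conjOp_adjoint (A : H →L[ℂ] H) : hC.conjOp (adjoint A) = adjoint (hC.conjOp A) := by
  refine (eq_adjoint_iff _ _).2 fun x y => ?_
  calc inner ℂ (C (adjoint A (C x))) y
      = inner ℂ (C (adjoint A (C x))) (C (C y)) := by rw [hC.apply_apply]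
    _ = inner ℂ (A (C y)) (C x) := by rw [hC.inner_apply_apply, adjoint_inner_right]
    _ = inner ℂ x (C (A (C y))) := by rw [← hC.inner_apply_apply (C x), hC.apply_apply]

theorem mem_SC_iff {T : H →L[ℂ] H} : T ∈ SC C ↔ hC.conjOp T = adjoint T :=
  (ContinuousLinearMap.ext_iff (f := hC.conjOp T)).symm

noncomputable def symmetrize (G : H →L[ℂ] H) : H →L[ℂ] H :=
  (2 : ℂ)⁻¹ • (G + hC.conjOp (adjoint G))

theorem symmetrize_mem_SC (G : H →L[ℂ] H) : hC.symmetrize G ∈ SC C := by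
  have h := hC.conjOp_adjoint (adjoint G)
  rw [adjoint_adjoint] at h
  rw [hC.mem_SC_iff, symmetrize, hC.conjOp_smul, hC.conjOp_add, hC.conjOp_conjOp, map_smulₛₗ,
    map_add, ← h, add_comm]

theorem norm_sub_symmetrize_le {T : H →L[ℂ] H} (hT : T ∈ SC C) (G : H →L[ℂ] H) :
    ‖T - hC.symmetrize G‖ ≤ ‖T - G‖ := by
  have hTT : hC.conjOp (adjoint T) = T := by
    rw [← (hC.mem_SC_iff).1 hT, conjOp_conjOp]
  have hsplit : T - hC.symmetrize G = (2 : ℂ)⁻¹ • ((T - G) + hC.conjOp (adjoint (T - G))) := by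
    rw [map_sub, hC.conjOp_sub, hTT, symmetrize]
    module
  calc ‖T - hC.symmetrize G‖
      ≤ ‖(2 : ℂ)⁻¹‖ * (‖T - G‖ + ‖hC.conjOp (adjoint (T - G))‖) := by
        rw [hsplit, norm_smul]
        gcongr
        exact norm_add_le _ _
    _ ≤ ‖(2 : ℂ)⁻¹‖ * (‖T - G‖ + ‖T - G‖) := by
        gcongr
        exact (hC.norm_conjOp_le _).trans (adjoint.norm_map _).le
    _ = ‖T - G‖ := by norm_num; ring

theorem rank_symmetrize_le {G : H →L[ℂ] H} (hG : IsFiniteRank G) :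
    LinearMap.rank (hC.symmetrize G : H →ₗ[ℂ] H) ≤ 2 * LinearMap.rank (G : H →ₗ[ℂ] H) := by
  have : FiniteDimensional ℂ (LinearMap.range (G : H →ₗ[ℂ] H)) := hG
  calc LinearMap.rank (hC.symmetrize G : H →ₗ[ℂ] H)
      ≤ LinearMap.rank ((G + hC.conjOp (adjoint G) : H →L[ℂ] H) : H →ₗ[ℂ] H) :=
        Submodule.rank_mono (LinearMap.range_smul_le_range _ _)
    _ ≤ LinearMap.rank (G : H →ₗ[ℂ] H) + LinearMap.rank (adjoint G : H →ₗ[ℂ] H) := by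
        rw [toLinearMap_add, ← hC.rank_conjOp (adjoint G)]
        exact LinearMap.rank_add_le _ _
    _ ≤ 2 * LinearMap.rank (G : H →ₗ[ℂ] H) := by
        rw [two_mul]
        gcongr
        exact G.rank_adjoint_le

theorem isFiniteRank_symmetrize {G : H →L[ℂ] H} (hG : IsFiniteRank G) :
    IsFiniteRank (hC.symmetrize G) :=
  isFiniteRank_iff_rank_lt_aleph0.2 <| (hC.rank_symmetrize_le hG).trans_lt <|
    Cardinal.mul_lt_aleph0 Cardinal.ofNat_lt_aleph0 (isFiniteRank_iff_rank_lt_aleph0.1 hG)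

end IsConjugation

section approxNum

variable {H : Type*} [NormedAddCommGroup H] [InnerProductSpace ℂ H]

theorem isFiniteRank_and_finrank_le_iff {F : H →L[ℂ] H} {n : ℕ} :
    (IsFiniteRank F ∧ Module.finrank ℂ (LinearMap.range (F : H →ₗ[ℂ] H)) ≤ n) ↔
      LinearMap.rank (F : H →ₗ[ℂ] H) ≤ n := by
  refine ⟨fun ⟨hF, hn⟩ => ?_, fun h => ⟨?_, Module.finrank_le_of_rank_le h⟩⟩
  · have : FiniteDimensional ℂ (LinearMap.range (F : H →ₗ[ℂ] H)) := hF
    rw [LinearMap.rank, ← Module.finrank_eq_rank]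
    exact_mod_cast hn
  · exact isFiniteRank_iff_rank_lt_aleph0.2 (h.trans_lt Cardinal.natCast_lt_aleph0)

theorem approxNum_eq_sInf (T : H →L[ℂ] H) (n : ℕ) :
    approxNum T n = sInf ((fun F => ‖T - F‖) '' {F | LinearMap.rank (F : H →ₗ[ℂ] H) ≤ n}) := by
  simp only [approxNum, and_assoc.symm, isFiniteRank_and_finrank_le_iff, Set.image, eq_comm]
  rfl

theorem bddBelow_norm_sub_image (T : H →L[ℂ] H) (S : Set (H →L[ℂ] H)) :
    BddBelow ((fun F => ‖T - F‖) '' S) :=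
  ⟨0, by rintro _ ⟨F, -, rfl⟩; exact norm_nonneg _⟩

theorem nonempty_rank_le_image (T : H →L[ℂ] H) (n : ℕ) :
    ((fun F => ‖T - F‖) '' {F : H →L[ℂ] H | LinearMap.rank (F : H →ₗ[ℂ] H) ≤ n}).Nonempty :=
  ⟨_, 0, by simp, rfl⟩

theorem approxNum_nonneg (T : H →L[ℂ] H) (n : ℕ) : 0 ≤ approxNum T n := by
  rw [approxNum_eq_sInf]
  exact Real.sInf_nonneg (by rintro _ ⟨F, -, rfl⟩; exact norm_nonneg _)

theorem approxNum_le {T F : H →L[ℂ] H} {n : ℕ} (hF : LinearMap.rank (F : H →ₗ[ℂ] H) ≤ n) :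
    approxNum T n ≤ ‖T - F‖ := by
  rw [approxNum_eq_sInf]
  exact csInf_le (bddBelow_norm_sub_image T _) ⟨F, hF, rfl⟩

theorem approxNum_le_norm (T : H →L[ℂ] H) (n : ℕ) : approxNum T n ≤ ‖T‖ := by
  simpa using approxNum_le (T := T) (F := 0) (n := n) (by simp)

theorem approxNum_antitone (T : H →L[ℂ] H) : Antitone (approxNum T) := by
  intro m n hmn
  rw [approxNum_eq_sInf, approxNum_eq_sInf]
  exact csInf_le_csInf (bddBelow_norm_sub_image T _) (nonempty_rank_le_image T m)
    (Set.image_mono fun _ hF => show _ ≤ (n : Cardinal) from le_trans hF (Nat.cast_le.2 hmn))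

theorem approxNum_sub_add_le {T F : H →L[ℂ] H} {k : ℕ}
    (hF : LinearMap.rank (F : H →ₗ[ℂ] H) ≤ k) (n : ℕ) :
    approxNum (T - F) (n + k) ≤ approxNum T n := by
  rw [approxNum_eq_sInf T]
  refine le_csInf (nonempty_rank_le_image T n) ?_
  rintro _ ⟨G, hG, rfl⟩
  have hGF : LinearMap.rank ((G - F : H →L[ℂ] H) : H →ₗ[ℂ] H) ≤ ↑(n + k) := by
    rw [ContinuousLinearMap.toLinearMap_sub, Nat.cast_add]
    exact (LinearMap.rank_sub_le _ _).trans (add_le_add hG hF)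
  simpa using approxNum_le (T := T - F) hGF

theorem Filter.Eventually.exists_rank_le_approxNum {T : H →L[ℂ] H} {n : ℕ} {P : ℝ → Prop}
    (hP : ∀ᶠ r in 𝓝 (approxNum T n), P r) :
    ∃ G : H →L[ℂ] H, LinearMap.rank (G : H →ₗ[ℂ] H) ≤ n ∧ P ‖T - G‖ := by
  have hmem := csInf_mem_closure (nonempty_rank_le_image T n) (bddBelow_norm_sub_image T _)
  rw [← approxNum_eq_sInf] at hmem
  obtain ⟨_, hr, G, hG, rfl⟩ := mem_closure_iff_nhds.1 hmem _ hP
  exact ⟨G, hG, hr⟩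

end approxNum

section Schatten

variable {H : Type*} [NormedAddCommGroup H] [InnerProductSpace ℂ H]

theorem schattenNorm_lt_of_tsum_lt {p ε : ℝ} (hp : 0 < p) (hε : 0 ≤ ε) {T : H →L[ℂ] H}
    (h : ∑' n, approxNum T n ^ p < ε ^ p) : schattenNorm p T < ε := by
  have h0 : 0 ≤ ∑' n, approxNum T n ^ p :=
    tsum_nonneg fun n => Real.rpow_nonneg (approxNum_nonneg T n) p
  simpa [schattenNorm, Real.rpow_rpow_inv hε hp.ne'] using
    Real.rpow_lt_rpow h0 h (one_div_pos.2 hp)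

theorem MemSchatten.exists_forall_schattenNorm_sub_lt {p : ℝ} (hp : 0 < p) {T : H →L[ℂ] H}
    (hT : MemSchatten p T) {ε : ℝ} (hε : 0 < ε) :
    ∃ G : H →L[ℂ] H, IsFiniteRank G ∧ ∀ F : H →L[ℂ] H,
      LinearMap.rank (F : H →ₗ[ℂ] H) ≤ 2 * LinearMap.rank (G : H →ₗ[ℂ] H) →
      ‖T - F‖ ≤ ‖T - G‖ → MemSchatten p (T - F) ∧ schattenNorm p (T - F) < ε := by
  set f : ℕ → ℝ := fun n => approxNum T n ^ p
  have hf0 : 0 ≤ f := fun n => Real.rpow_nonneg (approxNum_nonneg T n) p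
  have hf : Antitone f := fun m n hmn =>
    Real.rpow_le_rpow (approxNum_nonneg T n) (approxNum_antitone T hmn) hp.le
  obtain ⟨k, hk⟩ := ((tendsto_sum_nat_add f).eventually
    (gt_mem_nhds (by positivity : 0 < ε ^ p / 6))).exists
  have hhead : 5 * k * approxNum T (k + k) ^ p + ∑' n, f (n + k) < ε ^ p := by
    have := hf.nat_mul_le_tsum_nat_add hT hf0 k k
    linarith
  have hcont : ContinuousAt (fun r : ℝ => 5 * k * r ^ p + ∑' n, f (n + k)) (approxNum T (k + k)) :=
    ((Real.continuous_rpow_const hp.le).continuousAt.const_mul _).add continuousAt_const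
  obtain ⟨G, hGrank, hG⟩ := (hcont.eventually_lt continuousAt_const hhead).exists_rank_le_approxNum
  refine ⟨G, isFiniteRank_iff_rank_lt_aleph0.2 (hGrank.trans_lt Cardinal.natCast_lt_aleph0),
    fun F hFrank hFG => ?_⟩
  have hF : LinearMap.rank (F : H →ₗ[ℂ] H) ≤ ↑(4 * k) := by
    calc LinearMap.rank (F : H →ₗ[ℂ] H) ≤ 2 * LinearMap.rank (G : H →ₗ[ℂ] H) := hFrank
      _ ≤ 2 * ↑(k + k) := by gcongr
      _ = ↑(4 * k) := by push_cast; ring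
  have hshift : ∀ n, approxNum (T - F) (n + 5 * k) ^ p ≤ f (n + k) := fun n => by
    refine Real.rpow_le_rpow (approxNum_nonneg _ _) ?_ hp.le
    simpa [show n + k + 4 * k = n + 5 * k by ring] using approxNum_sub_add_le hF (n + k)
  have hbound : ∀ n, approxNum (T - F) n ^ p ≤ ‖T - G‖ ^ p := fun n =>
    Real.rpow_le_rpow (approxNum_nonneg _ _) ((approxNum_le_norm _ n).trans hFG) hp.le
  obtain ⟨hsum, hle⟩ := summable_and_tsum_le_of_shift
    (fun n => Real.rpow_nonneg (approxNum_nonneg (T - F) n) p)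
    ((summable_nat_add_iff k).2 hT) hbound hshift
  refine ⟨hsum, schattenNorm_lt_of_tsum_lt hp hε.le (hle.trans_lt ?_)⟩
  push_cast
  linarith

end Schatten

theorem stmt6_general {H : Type*} [NormedAddCommGroup H] [InnerProductSpace ℂ H] [CompleteSpace H]
    (C : H → H) (hC : IsConjugation C) (p : ℝ) (hp : 1 ≤ p) :
    (∀ T ∈ SC C, MemSchatten p T → ∀ ε > (0 : ℝ),
      ∃ F ∈ SC C, IsFiniteRank F ∧ MemSchatten p (T - F) ∧ schattenNorm p (T - F) < ε) ∧
    (∀ T ∈ SC C, IsCompactOperator (⇑T) → ∀ ε > (0 : ℝ),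
      ∃ F ∈ SC C, IsFiniteRank F ∧ ‖T - F‖ < ε) := by
  constructor
  · intro T hT hSchatten ε hε
    obtain ⟨G, hG, hclose⟩ :=
      hSchatten.exists_forall_schattenNorm_sub_lt (zero_lt_one.trans_le hp) hε
    exact ⟨hC.symmetrize G, hC.symmetrize_mem_SC G, hC.isFiniteRank_symmetrize hG,
      hclose _ (hC.rank_symmetrize_le hG) (hC.norm_sub_symmetrize_le hT G)⟩
  · intro T hT hcompact ε hε
    obtain ⟨G, hG, hclose⟩ := hcompact.exists_finiteDimensional_range_norm_sub_lt hε
    exact ⟨hC.symmetrize G, hC.symmetrize_mem_SC G, hC.isFiniteRank_symmetrize hG,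
      (hC.norm_sub_symmetrize_le hT G).trans_lt hclose⟩

/-- Finite-rank operators in `S_C` are dense in `S_C ∩ B_p(H)` for the Schatten
`p`-norm (`1 ≤ p < ∞`), and in `S_C ∩ K(H)` for the operator norm. -/
theorem stmt6 {H : Type*} [NormedAddCommGroup H] [InnerProductSpace ℂ H] [CompleteSpace H]
    [TopologicalSpace.SeparableSpace H] (hdim : ¬ FiniteDimensional ℂ H)
    (C : H → H) (hC : IsConjugation C) (p : ℝ) (hp : 1 ≤ p) :
    (∀ T ∈ SC C, MemSchatten p T → ∀ ε > (0 : ℝ),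
      ∃ F ∈ SC C, IsFiniteRank F ∧ MemSchatten p (T - F) ∧ schattenNorm p (T - F) < ε) ∧
    (∀ T ∈ SC C, IsCompactOperator (⇑T) → ∀ ε > (0 : ℝ),
      ∃ F ∈ SC C, IsFiniteRank F ∧ ‖T - F‖ < ε) :=
  stmt6_general C hC p hp
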